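/- Let k be an algebraically closed field of characteristic zero and let c ∈ k[τ] be a nonzero polynomial in indeterminates τ = (τ₁,…,τ_s). If f ∈ k(τ)[[x₁,…,x_{r+1}]] is uniformly rational in τ, i.e. f = Σ_α a_α(τ) x^α with a_α = b_α / c^{|α|} for polynomials b_α ∈ k[τ], and f is regular in x_{r+1} (f(0,…,0,x_{r+1}) ≢ 0), then in the Weierstrass factorization f = (x_{r+1}^d + Σ_{i=1}^d a_i(x', τ) x_{r+1}^{d-i}) · unit over k(τ), each coefficient a_i ∈ k(τ)[[x']] is again uniformly rational in τ (possibly with a different denominator c'). -/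

import Mathlib

/-
Let `f_{0,d} = b / c^d` be the first nonzero coefficient of `f(0, y)`. After the substitution
`x' ↦ c b^{d+1} x'`, `y ↦ c b y` the coefficient of `x'^α y^j` becomes `b_{α,j} b^{(d+1)|α| + j}`,
so dividing by `b^{d+1}` yields a series `g` with coefficients in `A = k[τ]` and
`g(0, y) = y^d + ⋯`. Since `A[[x']]` is complete for the `(x')`-adic topology, Weierstrass
preparation holds for `g` over `A` itself; undoing the substitution gives a factorization of `f`
whose coefficients have powers of `c b^{d+1}` as denominators.
-/

/-- A power series over `k(τ) := Frac(k[τ₁,…,τ_s])` is *uniformly rational in τ* if there is a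
nonzero polynomial `c ∈ k[τ]` such that every coefficient `a_α` satisfies
`a_α · c^{|α|} ∈ k[τ]`, i.e. `a_α = b_α / c^{|α|}`. -/
def UniformlyRational {k : Type*} [Field k] (s : ℕ) {n : ℕ}
    (f : MvPowerSeries (Fin n) (FractionRing (MvPolynomial (Fin s) k))) : Prop :=
  ∃ c : MvPolynomial (Fin s) k, c ≠ 0 ∧ ∀ α : Fin n →₀ ℕ, ∃ b : MvPolynomial (Fin s) k,
    MvPowerSeries.coeff α f *
      (algebraMap (MvPolynomial (Fin s) k) (FractionRing (MvPolynomial (Fin s) k)) c) ^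
        (α.sum fun _ e => e) =
      algebraMap (MvPolynomial (Fin s) k) (FractionRing (MvPolynomial (Fin s) k)) b

/-- The natural inclusion `K[[x₁,…,x_r]] → K[[x₁,…,x_{r+1}]]`
(series not involving the last variable). -/
noncomputable def embFirst {K : Type*} [CommRing K] {r : ℕ} (a : MvPowerSeries (Fin r) K) :
    MvPowerSeries (Fin (r + 1)) K :=
  fun m => if m (Fin.last r) = 0
    then MvPowerSeries.coeff (Finsupp.equivFunOnFinite.symm fun i : Fin r => m i.castSucc) a
    else 0

namespace MvPowerSeries

variable {σ R : Type*} [CommSemiring R]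

theorem ker_constantCoeff [Finite σ] :
    RingHom.ker (constantCoeff (σ := σ) (R := R)) = Ideal.span (Set.range X) := by
  classical
  cases nonempty_fintype σ
  refine le_antisymm (fun a ha => ?_) (Ideal.span_le.mpr ?_)
  · -- `ι n` is a variable occurring in `n`; `b i` collects the monomials of `a` sent to `i`
    choose ι hι using fun n : {n : σ →₀ ℕ // n ≠ 0} => Finsupp.ne_iff.mp n.2
    let b : σ → MvPowerSeries σ R := fun i m =>
      if ι ⟨m + Finsupp.single i 1, by simp⟩ = i then coeff (m + Finsupp.single i 1) a else 0
    have hab : a = ∑ i, X i * b i := by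
      ext n
      simp only [map_sum, X_def, coeff_monomial_mul, one_mul]
      by_cases hn : n = 0
      · subst hn
        simpa [Finsupp.single_le_iff] using ha
      have hb : ∀ i, Finsupp.single i 1 ≤ n →
          coeff (n - Finsupp.single i 1) (b i) = if ι ⟨n, hn⟩ = i then coeff n a else 0 := by
        intro i hi
        show (if ι ⟨n - Finsupp.single i 1 + Finsupp.single i 1, _⟩ = i then _ else _) = _
        simp only [tsub_add_cancel_of_le hi]
      rw [Finset.sum_eq_single (ι ⟨n, hn⟩)]
      · have hle := Finsupp.single_le_iff.mpr (Nat.one_le_iff_ne_zero.mpr (hι ⟨n, hn⟩))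
        rw [if_pos hle, hb _ hle, if_pos rfl]
      · intro i _ hi
        split_ifs with hle
        · rw [hb i hle, if_neg (Ne.symm hi)]
        · rfl
      · simp
    rw [hab]
    exact Ideal.sum_mem _ fun i _ => Ideal.mul_mem_right _ _ (Ideal.subset_span ⟨i, rfl⟩)
  · rintro _ ⟨i, rfl⟩
    simp

theorem rescale_X (w : σ → R) (i : σ) : rescale w (X i) = C (w i) * X i := by
  classical
  ext m
  rw [coeff_rescale, coeff_C_mul, coeff_X]
  split_ifs with h
  · simp [h]
  · simp

theorem constantCoeff_rescale (w : σ → R) (p : MvPowerSeries σ R) :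
    constantCoeff (rescale w p) = constantCoeff p := by
  rw [← coeff_zero_eq_constantCoeff_apply, coeff_rescale, Finsupp.prod_zero_index, one_mul,
    coeff_zero_eq_constantCoeff_apply]

theorem rescale_C (w : σ → R) (x : R) : rescale w (C x) = C x := by
  classical
  ext m
  rw [coeff_rescale, coeff_C]
  split_ifs with h
  · simp [h]
  · rw [mul_zero]

end MvPowerSeries

namespace PowerSeries

variable {A : Type*} [CommRing A] {I : Ideal A}

theorem isUnit_of_X_pow_eq_mul_add [IsAdicComplete I A] {g q : A⟦X⟧} {r : Polynomial A} {d : ℕ}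
    (hlow : ∀ j < d, coeff j g ∈ I) (hr : r.degree < d) (h : X ^ d = g * q + (r : A⟦X⟧)) :
    IsUnit q := by
  -- comparing `X ^ d`-coefficients gives `g_d q_0 ∈ 1 + I`, and `I` lies in the Jacobson radical
  have hgq : coeff d (g * q) = 1 := by
    have := congr(coeff d $h)
    rwa [coeff_X_pow_self, map_add, Polynomial.coeff_coe,
      Polynomial.coeff_eq_zero_of_degree_lt hr, add_zero, eq_comm] at this
  have hsplit : g * q = (g - C (coeff d g) * X ^ d) * q + C (coeff d g) * (X ^ d * q) := by
    ring
  have hlead : 1 - coeff d g * constantCoeff q ∈ I := by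
    have := coeff_mul_mem_ideal_of_coeff_left_mem_ideal (I := I)
      (f := g - C (coeff d g) * X ^ d) (g := q) d (fun i hi => ?_) d le_rfl
    · rw [hsplit, map_add, coeff_C_mul, coeff_X_pow_mul', if_pos le_rfl, Nat.sub_self,
        coeff_zero_eq_constantCoeff_apply] at hgq
      rwa [← hgq, add_sub_cancel_right]
    · rw [map_sub, coeff_C_mul_X_pow]
      rcases hi.lt_or_eq with hi | rfl
      · rw [if_neg hi.ne, sub_zero]
        exact hlow i hi
      · rw [if_pos rfl, sub_self]
        exact I.zero_mem
  have := Ideal.mem_jacobson_bot.mp (IsAdicComplete.le_jacobson_bot I hlead) (-1)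
  rw [mul_neg_one, neg_sub, sub_add_cancel] at this
  exact isUnit_iff_constantCoeff.mpr (isUnit_of_mul_isUnit_right this)

theorem exists_isWeierstrassFactorizationAt [IsAdicComplete I A] {g : A⟦X⟧} {d : ℕ}
    (hlow : ∀ j < d, coeff j g ∈ I) (hd : IsUnit (coeff d g)) :
    ∃ f h, g.IsWeierstrassFactorizationAt f h I := by
  rcases eq_or_ne I ⊤ with rfl | hI
  · have := (‹IsAdicComplete ⊤ A›.toIsHausdorff).subsingleton
    exact ⟨1, g, ⟨⟨fun _ => Submodule.mem_top⟩, Polynomial.monic_one⟩,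
      isUnit_of_subsingleton _, Subsingleton.elim _ _⟩
  have : Nontrivial A := ⟨0, 1, fun h => hI ((Ideal.eq_top_iff_one I).mpr (h ▸ I.zero_mem))⟩
  have horder : (g.map (Ideal.Quotient.mk I)).order.toNat = d := by
    rw [order_eq_nat.mpr ⟨?_, fun i hi => ?_⟩, ENat.toNat_natCast]
    · rw [coeff_map, ne_eq, Ideal.Quotient.eq_zero_iff_mem]
      exact fun h => hI (I.eq_top_of_isUnit_mem h hd)
    · rw [coeff_map, Ideal.Quotient.eq_zero_iff_mem]
      exact hlow i hi
  have hdiv : g.IsWeierstrassDivisorAt I := by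
    rwa [IsWeierstrassDivisorAt, horder]
  set q := hdiv.div (X ^ d)
  set r := hdiv.mod (X ^ d)
  have H : (X ^ d).IsWeierstrassDivisionAt g q r I := hdiv.isWeierstrassDivisionAt_div_mod _
  have hr : r.degree < d := horder ▸ H.degree_lt
  have hq : IsUnit q := isUnit_of_X_pow_eq_mul_add hlow hr H.eq_mul_add
  have hdeg : (Polynomial.X ^ d - r).natDegree = d := Polynomial.natDegree_eq_of_degree_eq_some
    (by rw [Polynomial.degree_sub_eq_left_of_degree_lt (by rwa [Polynomial.degree_X_pow]),
      Polynomial.degree_X_pow])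
  refine ⟨Polynomial.X ^ d - r, ↑hq.unit⁻¹, ⟨⟨fun {i} hi => ?_⟩, Polynomial.monic_X_pow_sub hr⟩,
    Units.isUnit _, ?_⟩
  · rw [hdeg] at hi
    have := H.coeff_f_sub_r_mem (horder ▸ hi)
    rw [map_sub, coeff_X_pow, if_neg hi.ne, Polynomial.coeff_coe] at this
    rwa [Polynomial.coeff_sub, Polynomial.coeff_X_pow, if_neg hi.ne]
  · rw [Polynomial.coe_sub, Polynomial.coe_pow, Polynomial.coe_X, H.eq_mul_add,
      add_sub_cancel_right, mul_assoc, IsUnit.mul_val_inv, mul_one]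

end PowerSeries

theorem Polynomial.Monic.coe_eq_X_pow_add_sum {A : Type*} [CommRing A] {f : Polynomial A}
    (hf : f.Monic) :
    (f : PowerSeries A) = PowerSeries.X ^ f.natDegree + ∑ i : Fin f.natDegree,
      PowerSeries.C (f.coeff (f.natDegree - 1 - i)) *
        PowerSeries.X ^ (f.natDegree - 1 - (i : ℕ)) := by
  conv_lhs => rw [hf.as_sum]
  rw [Fin.sum_univ_eq_sum_range (fun i => PowerSeries.C (f.coeff (f.natDegree - 1 - i)) *
      PowerSeries.X ^ (f.natDegree - 1 - i)),
    Finset.sum_range_reflect (fun i => PowerSeries.C (f.coeff i) * PowerSeries.X ^ i),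
    Polynomial.coe_add, Polynomial.coe_pow, Polynomial.coe_X,
    ← Polynomial.coeToPowerSeries.ringHom_apply, map_sum]
  simp

theorem Finsupp.prod_pow_snoc_const {R : Type*} [CommMonoid R] {r : ℕ} (L M : R)
    (m : Fin (r + 1) →₀ ℕ) :
    (m.prod fun i e => (Fin.snoc (α := fun _ => R) (fun _ => L) M i) ^ e) =
      L ^ (∑ i : Fin r, m i.castSucc) * M ^ m (Fin.last r) := by
  rw [Finsupp.prod_fintype _ _ (fun _ => pow_zero _), Fin.prod_univ_castSucc]
  simp [Finset.prod_pow_eq_pow_sum]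

theorem Finsupp.eq_single_last_of_sum_castSucc_eq_zero {r : ℕ} {m : Fin (r + 1) →₀ ℕ}
    (hm : ∑ i : Fin r, m i.castSucc = 0) : m = Finsupp.single (Fin.last r) (m (Fin.last r)) := by
  ext i
  induction i using Fin.lastCases with
  | last => simp
  | cast i =>
    rw [Finset.sum_eq_zero_iff] at hm
    simp [hm i (Finset.mem_univ _), (Fin.castSucc_lt_last i).ne]

noncomputable def MvPowerSeries.finSuccEquivLast (R : Type*) [CommRing R] (r : ℕ) :
    MvPowerSeries (Fin (r + 1)) R ≃ₐ[R] PowerSeries (MvPowerSeries (Fin r) R) :=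
  (renameEquiv R _root_.finSuccEquivLast).trans (optionEquivLeft (Fin r) R)

open MvPowerSeries

variable {r : ℕ}

section LastVariable

variable {R : Type*} [CommRing R]

theorem coeff_embFirst (a : MvPowerSeries (Fin r) R) (m : Fin (r + 1) →₀ ℕ) :
    coeff m (embFirst a) = if m (Fin.last r) = 0
      then coeff (Finsupp.equivFunOnFinite.symm fun i : Fin r => m i.castSucc) a else 0 :=
  rfl

theorem embFirst_C_mul (x : R) (a : MvPowerSeries (Fin r) R) :
    embFirst (C x * a) = C x * embFirst a := by
  ext m
  rw [coeff_C_mul, coeff_embFirst, coeff_embFirst, coeff_C_mul]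
  split_ifs <;> simp

theorem map_embFirst {S : Type*} [CommRing S] (φ : R →+* S) (a : MvPowerSeries (Fin r) R) :
    map φ (embFirst a) = embFirst (map φ a) := by
  ext m
  rw [coeff_map, coeff_embFirst, coeff_embFirst, coeff_map]
  split_ifs <;> simp

theorem rescale_embFirst (w : Fin (r + 1) → R) (a : MvPowerSeries (Fin r) R) :
    rescale w (embFirst a) = embFirst (rescale (fun i => w i.castSucc) a) := by
  ext m
  rw [coeff_rescale, coeff_embFirst, coeff_embFirst, coeff_rescale]
  split_ifs with h
  · rw [Finsupp.prod_fintype _ _ (fun _ => pow_zero _), Fin.prod_univ_castSucc, h, pow_zero,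
      mul_one, Finsupp.prod_fintype _ _ (fun _ => pow_zero _)]
    simp
  · rw [mul_zero]

theorem MvPowerSeries.coeff_coeff_finSuccEquivLast (p : MvPowerSeries (Fin (r + 1)) R) (k : ℕ)
    (x : Fin r →₀ ℕ) :
    coeff x (PowerSeries.coeff k (finSuccEquivLast R r p)) =
      coeff (Finsupp.equivFunOnFinite.symm (Fin.snoc (α := fun _ => ℕ) x k)) p := by
  have : x.optionElim k = Finsupp.embDomain _root_.finSuccEquivLast.toEmbedding
      (Finsupp.equivFunOnFinite.symm (Fin.snoc (α := fun _ => ℕ) x k)) := by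
    ext o
    cases o with
    | none => simpa using (Finsupp.embDomain_apply_self _root_.finSuccEquivLast.toEmbedding
        (Finsupp.equivFunOnFinite.symm (Fin.snoc (α := fun _ => ℕ) x k)) (Fin.last r)).symm
    | some i => simpa using (Finsupp.embDomain_apply_self _root_.finSuccEquivLast.toEmbedding
        (Finsupp.equivFunOnFinite.symm (Fin.snoc (α := fun _ => ℕ) x k)) i.castSucc).symm
  rw [finSuccEquivLast, AlgEquiv.trans_apply, coeff_coeff_optionEquivLeft, this, renameEquiv_apply]
  exact coeff_embDomain_rename _ _ _

theorem MvPowerSeries.finSuccEquivLast_X_last :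
    finSuccEquivLast R r (X (Fin.last r)) = PowerSeries.X := by
  simp [finSuccEquivLast, _root_.finSuccEquivLast_last]

theorem MvPowerSeries.finSuccEquivLast_embFirst (a : MvPowerSeries (Fin r) R) :
    finSuccEquivLast R r (embFirst a) = PowerSeries.C a := by
  ext k x
  rw [coeff_coeff_finSuccEquivLast, PowerSeries.coeff_C, coeff_embFirst]
  simp only [Finsupp.equivFunOnFinite_symm_apply_apply, Fin.snoc_last, Fin.snoc_castSucc,
    Finsupp.equivFunOnFinite_symm_coe]
  split_ifs <;> simp

noncomputable def weierstrassPoly {n : ℕ} (a : Fin n → MvPowerSeries (Fin r) R) :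
    MvPowerSeries (Fin (r + 1)) R :=
  X (Fin.last r) ^ n + ∑ i : Fin n, embFirst (a i) * X (Fin.last r) ^ (n - 1 - (i : ℕ))

theorem finSuccEquivLast_weierstrassPoly {n : ℕ} (a : Fin n → MvPowerSeries (Fin r) R) :
    finSuccEquivLast R r (weierstrassPoly a) =
      PowerSeries.X ^ n + ∑ i : Fin n, PowerSeries.C (a i) * PowerSeries.X ^ (n - 1 - (i : ℕ)) := by
  simp [weierstrassPoly, finSuccEquivLast_X_last, finSuccEquivLast_embFirst]

theorem map_weierstrassPoly {S : Type*} [CommRing S] (φ : R →+* S) {n : ℕ}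
    (a : Fin n → MvPowerSeries (Fin r) R) :
    map φ (weierstrassPoly a) = weierstrassPoly fun i => map φ (a i) := by
  simp [weierstrassPoly, map_embFirst]

theorem rescale_weierstrassPoly {K : Type*} [Field K] (ℓ : Fin r → K) {m : K} (hm : m ≠ 0)
    {n : ℕ} (a : Fin n → MvPowerSeries (Fin r) K) :
    rescale (Fin.snoc (α := fun _ => K) ℓ m⁻¹) (weierstrassPoly a) =
      C (m⁻¹ ^ n) * weierstrassPoly fun i => C (m ^ ((i : ℕ) + 1)) * rescale ℓ (a i) := by
  have hsnoc : (fun i : Fin r => Fin.snoc (α := fun _ => K) ℓ m⁻¹ i.castSucc) = ℓ := by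
    simp only [Fin.snoc_castSucc]
  rw [weierstrassPoly, weierstrassPoly, map_add, map_sum, mul_add, Finset.mul_sum, map_pow,
    rescale_X, Fin.snoc_last, mul_pow, ← map_pow]
  congr 1
  refine Finset.sum_congr rfl fun i _ => ?_
  have hpow : m⁻¹ ^ (n - 1 - (i : ℕ)) = m⁻¹ ^ n * m ^ ((i : ℕ) + 1) := by
    rw [Nat.sub_sub, add_comm 1, pow_sub₀ _ (inv_ne_zero hm) (by omega)]
    simp only [inv_pow, inv_inv]
  rw [map_mul, map_pow, rescale_X, Fin.snoc_last, rescale_embFirst, hsnoc, embFirst_C_mul,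
    mul_pow, ← map_pow, hpow, map_mul]
  ring

theorem exists_eq_weierstrassPoly_mul {g : MvPowerSeries (Fin (r + 1)) R} {d : ℕ}
    (hlow : ∀ j < d, coeff (Finsupp.single (Fin.last r) j) g = 0)
    (hd : IsUnit (coeff (Finsupp.single (Fin.last r) d) g)) :
    ∃ (n : ℕ) (a : Fin n → MvPowerSeries (Fin r) R) (u : (MvPowerSeries (Fin (r + 1)) R)ˣ),
      (∀ i, constantCoeff (a i) = 0) ∧ g = weierstrassPoly a * u := by
  have hconst : ∀ j, constantCoeff (PowerSeries.coeff j (finSuccEquivLast R r g)) =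
      coeff (Finsupp.single (Fin.last r) j) g := fun j => by
    rw [← coeff_zero_eq_constantCoeff_apply, coeff_coeff_finSuccEquivLast]
    congr
    ext i
    induction i using Fin.lastCases <;> simp
  obtain ⟨f, h, hf⟩ := PowerSeries.exists_isWeierstrassFactorizationAt
    (I := Ideal.span (Set.range X)) (g := finSuccEquivLast R r g) (d := d)
    (fun j hj => by rw [← ker_constantCoeff, RingHom.mem_ker, hconst, hlow j hj])
    (by rw [isUnit_iff_constantCoeff, hconst]; exact hd)
  refine ⟨f.natDegree, fun i => f.coeff (f.natDegree - 1 - i),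
    (hf.isUnit.map (finSuccEquivLast R r).symm).unit, fun i => ?_, ?_⟩
  · rw [← RingHom.mem_ker, ker_constantCoeff]
    exact hf.isDistinguishedAt.mem (by omega)
  · apply (finSuccEquivLast R r).injective
    rw [map_mul, IsUnit.unit_spec, AlgEquiv.apply_symm_apply, finSuccEquivLast_weierstrassPoly,
      ← hf.isDistinguishedAt.monic.coe_eq_X_pow_add_sum, ← hf.eq_mul]

end LastVariable

section Normalization

variable {A K : Type*} [CommRing A] [Field K] (φ : A →+* K)

theorem coeff_inv_C_mul_rescale_mem_range {f : MvPowerSeries (Fin (r + 1)) K} {c b : A} {d : ℕ}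
    (hf : ∀ α, ∃ b, coeff α f * φ c ^ (α.sum fun _ e => e) = φ b)
    (hlow : ∀ j < d, coeff (Finsupp.single (Fin.last r) j) f = 0)
    (hb : coeff (Finsupp.single (Fin.last r) d) f * φ c ^ d = φ b) (hb0 : φ b ≠ 0)
    (m : Fin (r + 1) →₀ ℕ) :
    coeff m (C (φ b ^ (d + 1))⁻¹ *
      rescale (Fin.snoc (α := fun _ => K) (fun _ => φ (c * b ^ (d + 1))) (φ (c * b))) f) ∈
        Set.range φ := by
  obtain ⟨bm, hbm⟩ := hf m
  rw [Finsupp.sum_fintype _ _ (fun _ => rfl), Fin.sum_univ_castSucc] at hbm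
  obtain ⟨p, hp⟩ : ∃ p, ∑ i : Fin r, m i.castSucc = p := ⟨_, rfl⟩
  obtain ⟨j, hj⟩ : ∃ j, m (Fin.last r) = j := ⟨_, rfl⟩
  rw [hp, hj] at hbm
  have hrescale : coeff m (rescale (Fin.snoc (α := fun _ => K) (fun _ => φ (c * b ^ (d + 1)))
      (φ (c * b))) f) = φ (bm * b ^ ((d + 1) * p + j)) := by
    rw [coeff_rescale, Finsupp.prod_pow_snoc_const, hp, hj, map_mul φ bm, ← hbm]
    simp only [map_mul, map_pow]
    ring
  rw [coeff_C_mul, hrescale]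
  by_cases hN : d + 1 ≤ (d + 1) * p + j
  · obtain ⟨t, ht⟩ := Nat.exists_eq_add_of_le hN
    refine ⟨bm * b ^ t, ?_⟩
    rw [ht]
    simp only [map_mul, map_pow]
    field_simp
    ring
  obtain rfl : p = 0 := by
    by_contra hp0
    exact hN (le_add_right (Nat.le_mul_of_pos_right _ (Nat.pos_of_ne_zero hp0)))
  obtain rfl : m = Finsupp.single (Fin.last r) j :=
    hj ▸ Finsupp.eq_single_last_of_sum_castSucc_eq_zero hp
  rw [zero_add] at hbm
  rcases (by omega : j < d ∨ j = d) with hjd | rfl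
  · refine ⟨0, ?_⟩
    rw [map_mul, ← hbm, hlow j hjd]
    simp
  · refine ⟨1, ?_⟩
    rw [map_mul, ← hbm, hb, map_one, map_pow, mul_zero, zero_add, ← pow_succ',
      inv_mul_cancel₀ (pow_ne_zero _ hb0)]

theorem exists_eq_C_mul_rescale_map (hφ : Function.Injective φ) {f : MvPowerSeries (Fin (r + 1)) K}
    {c : A} (hc : c ≠ 0) (hf : ∀ α, ∃ b, coeff α f * φ c ^ (α.sum fun _ e => e) = φ b) {d : ℕ}
    (hlow : ∀ j < d, coeff (Finsupp.single (Fin.last r) j) f = 0)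
    (hd : coeff (Finsupp.single (Fin.last r) d) f ≠ 0) :
    ∃ (ℓ μ : A) (β : K) (g : MvPowerSeries (Fin (r + 1)) A), φ ℓ ≠ 0 ∧ φ μ ≠ 0 ∧ β ≠ 0 ∧
      (∀ j < d, coeff (Finsupp.single (Fin.last r) j) g = 0) ∧
      coeff (Finsupp.single (Fin.last r) d) g = 1 ∧
      f = C β * rescale (Fin.snoc (α := fun _ => K) (fun _ => (φ ℓ)⁻¹) (φ μ)⁻¹) (map φ g) := by
  obtain ⟨b, hb⟩ := hf (Finsupp.single (Fin.last r) d)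
  rw [Finsupp.sum_single_index rfl] at hb
  have hφc : φ c ≠ 0 := (map_ne_zero_iff φ hφ).mpr hc
  have hb0 : φ b ≠ 0 := hb ▸ mul_ne_zero hd (pow_ne_zero _ hφc)
  set w := Fin.snoc (α := fun _ => K) (fun _ => φ (c * b ^ (d + 1))) (φ (c * b))
  set F := C (φ b ^ (d + 1))⁻¹ * rescale w f
  obtain ⟨g, hgF⟩ : ∃ g : MvPowerSeries (Fin (r + 1)) A, map φ g = F := by
    choose g hg using coeff_inv_C_mul_rescale_mem_range φ hf hlow hb hb0
    exact ⟨g, MvPowerSeries.ext hg⟩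
  have hF : ∀ j, coeff (Finsupp.single (Fin.last r) j) F =
      (φ b ^ (d + 1))⁻¹ * φ (c * b) ^ j * coeff (Finsupp.single (Fin.last r) j) f := by
    intro j
    rw [coeff_C_mul, coeff_rescale]
    simp [w, mul_assoc]
  have hw : w * Fin.snoc (α := fun _ => K) (fun _ => (φ (c * b ^ (d + 1)))⁻¹) (φ (c * b))⁻¹ =
      1 := by
    funext i
    induction i using Fin.lastCases <;>
    · simp only [w, Fin.snoc_last, Fin.snoc_castSucc, Pi.mul_apply, Pi.one_apply]
      exact mul_inv_cancel₀ (by simp [hφc, hb0])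
  refine ⟨c * b ^ (d + 1), c * b, φ b ^ (d + 1), g, by simp [hφc, hb0], by simp [hφc, hb0],
    pow_ne_zero _ hb0, fun j hj => hφ ?_, hφ ?_, ?_⟩
  · rw [map_zero, ← coeff_map, hgF, hF, hlow j hj, mul_zero]
  · rw [map_one, ← coeff_map, hgF, hF, map_mul, mul_pow]
    field_simp
    linear_combination φ b ^ d * hb
  · rw [hgF, map_mul, rescale_C, rescale_rescale, hw, rescale_one, ← mul_assoc, ← map_mul,
      mul_inv_cancel₀ (pow_ne_zero _ hb0), map_one, one_mul, RingHom.id_apply]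

end Normalization

theorem uniformlyRational_C_mul_rescale_map {k : Type*} [Field k] {s n : ℕ}
    (a : MvPowerSeries (Fin n) (MvPolynomial (Fin s) k)) (μ : MvPolynomial (Fin s) k)
    {ℓ : MvPolynomial (Fin s) k}
    (hℓ : algebraMap (MvPolynomial (Fin s) k) (FractionRing (MvPolynomial (Fin s) k)) ℓ ≠ 0) :
    UniformlyRational s
      (C (algebraMap _ (FractionRing (MvPolynomial (Fin s) k)) μ) *
        rescale (fun _ => (algebraMap _ _ ℓ)⁻¹) (map (algebraMap _ _) a)) := by
  refine ⟨ℓ, fun h => hℓ (h ▸ map_zero _), fun α => ⟨μ * coeff α a, ?_⟩⟩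
  rw [coeff_C_mul, coeff_rescale, coeff_map, map_mul,
    Finsupp.prod_fintype _ _ (fun _ => pow_zero _), Finset.prod_pow_eq_pow_sum, Finsupp.sum_fintype _ _ (fun _ => rfl), inv_pow]
  field_simp

theorem weierstrass_coefficients_uniformly_rational_general
    {k : Type*} [Field k] (r s : ℕ)
    (f : MvPowerSeries (Fin (r + 1)) (FractionRing (MvPolynomial (Fin s) k)))
    (hUR : UniformlyRational s f)
    (hreg : ∃ m : ℕ, MvPowerSeries.coeff (Finsupp.single (Fin.last r) m) f ≠ 0) :
    ∃ (d : ℕ) (a : Fin d → MvPowerSeries (Fin r) (FractionRing (MvPolynomial (Fin s) k)))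
      (u : (MvPowerSeries (Fin (r + 1)) (FractionRing (MvPolynomial (Fin s) k)))ˣ),
      (∀ i, MvPowerSeries.constantCoeff (a i) = 0) ∧
      (∀ i, UniformlyRational s (a i)) ∧
      f = (MvPowerSeries.X (Fin.last r) ^ d +
            ∑ i : Fin d, embFirst (a i) * MvPowerSeries.X (Fin.last r) ^ (d - 1 - (i : ℕ))) *
          (u : MvPowerSeries (Fin (r + 1)) (FractionRing (MvPolynomial (Fin s) k))) := by
  classical
  set φ := algebraMap (MvPolynomial (Fin s) k) (FractionRing (MvPolynomial (Fin s) k))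
  obtain ⟨c, hc, hf⟩ := hUR
  obtain ⟨ℓ, μ, β, g, hℓ, hμ, hβ, hglow, hgd, rfl⟩ :=
    exists_eq_C_mul_rescale_map φ (IsFractionRing.injective _ _) hc hf
      (fun j hj => not_not.mp (Nat.find_min hreg hj)) (Nat.find_spec hreg)
  obtain ⟨n, a, u, ha0, rfl⟩ := exists_eq_weierstrassPoly_mul hglow (hgd ▸ isUnit_one)
  have hβμ : β * (φ μ)⁻¹ ^ n ≠ 0 := mul_ne_zero hβ (pow_ne_zero _ (inv_ne_zero hμ))
  have hunit : IsUnit (C (β * (φ μ)⁻¹ ^ n) *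
      rescale (Fin.snoc (α := fun _ => FractionRing (MvPolynomial (Fin s) k)) (fun _ => (φ ℓ)⁻¹)
        (φ μ)⁻¹) (map φ (u : MvPowerSeries (Fin (r + 1)) (MvPolynomial (Fin s) k)))) :=
    (hβμ.isUnit.map C).mul ((u.isUnit.map (map φ)).map (rescale _))
  refine ⟨n, fun i => C (φ (μ ^ ((i : ℕ) + 1))) * rescale (fun _ => (φ ℓ)⁻¹) (map φ (a i)),
    hunit.unit, fun i => by simp [constantCoeff_rescale, ha0], fun i => uniformlyRational_C_mul_rescale_map _ _ hℓ, ?_⟩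
  change _ = weierstrassPoly _ * _
  rw [IsUnit.unit_spec, map_mul, map_mul, map_weierstrassPoly, rescale_weierstrassPoly _ hμ]
  simp only [map_pow, map_mul]
  ring

/-- the Weierstrass preparation of a series uniformly rational in τ and regular
in `x_{r+1}` has Weierstrass coefficients `a_i ∈ k(τ)[[x']]` again uniformly rational in τ. -/
theorem weierstrass_coefficients_uniformly_rational
    {k : Type*} [Field k] [CharZero k] [IsAlgClosed k] (r s : ℕ)
    (f : MvPowerSeries (Fin (r + 1)) (FractionRing (MvPolynomial (Fin s) k)))
    (hUR : UniformlyRational s f)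
    (hreg : ∃ m : ℕ, MvPowerSeries.coeff (Finsupp.single (Fin.last r) m) f ≠ 0) :
    ∃ (d : ℕ) (a : Fin d → MvPowerSeries (Fin r) (FractionRing (MvPolynomial (Fin s) k)))
      (u : (MvPowerSeries (Fin (r + 1)) (FractionRing (MvPolynomial (Fin s) k)))ˣ),
      (∀ i, MvPowerSeries.constantCoeff (a i) = 0) ∧
      (∀ i, UniformlyRational s (a i)) ∧
      f = (MvPowerSeries.X (Fin.last r) ^ d +
            ∑ i : Fin d, embFirst (a i) * MvPowerSeries.X (Fin.last r) ^ (d - 1 - (i : ℕ))) *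
          (u : MvPowerSeries (Fin (r + 1)) (FractionRing (MvPolynomial (Fin s) k))) :=
  weierstrass_coefficients_uniformly_rational_general r s f hUR hreg
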